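/- Let G be a graph with independence number α ≥ 2, C a vertex cover of G with complement S satisfying 1 ≤ |S| ≤ α − 1, and H = G(C) the C-suspension. Then G is pseudo-Gorenstein* if and only if H is pseudo-Gorenstein*. -/

import Mathlib

open scoped Classical

/-- A finset of vertices is independent: no two of its members are adjacent. -/
def IsIndepFinset {V : Type*} (G : SimpleGraph V) (s : Finset V) : Prop :=
  ∀ a ∈ s, ∀ b ∈ s, ¬ G.Adj a b

/-- The independence polynomial of `G`, evaluated at `x : ℤ`:
`P_G(x) = Σ_i g_i x^i` where `g_i` is the number of independent sets of size `i`. -/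
noncomputable def indepPolynomial {V : Type*} [Fintype V] (G : SimpleGraph V) (x : ℤ) : ℤ :=
  ∑ s ∈ Finset.univ.filter (fun s : Finset V => IsIndepFinset G s), x ^ s.card

/-- The independence number of `G`. -/
noncomputable def indepNumber {V : Type*} [Fintype V] (G : SimpleGraph V) : ℕ :=
  (Finset.univ.filter (fun s : Finset V => IsIndepFinset G s)).sup Finset.card

/-- The `C`-suspension of `G`: adjoin a new vertex (`none`) adjacent exactly to `C`. -/
def susp {V : Type*} (G : SimpleGraph V) (C : Set V) : SimpleGraph (Option V) where
  Adj a b :=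
    match a, b with
    | some a, some b => G.Adj a b
    | some a, none => a ∈ C
    | none, some b => b ∈ C
    | none, none => False
  symm := by
    refine ⟨?_⟩
    rintro (_ | a) (_ | b) h
    · exact h
    · exact h
    · exact h
    · exact h.symm
  loopless := by
    refine ⟨?_⟩
    rintro (_ | a) h
    · exact h
    · exact G.ne_of_adj h rfl

/-- A graph is pseudo-Gorenstein* iff `P_G(-1) = (-1)^{α(G)}`. -/
noncomputable def PseudoGorensteinStar {V : Type*} [Fintype V] (G : SimpleGraph V) : Prop :=
  indepPolynomial G (-1) = (-1) ^ indepNumber G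

/-! Splitting the independent sets of `susp G C` according to whether they contain the new
vertex gives `P_{G(C)}(x) = P_G(x) + x (1 + x)^{|S|}`, because every subset of `S = Cᶜ` is
independent when `C` is a vertex cover; at `x = -1` the extra term vanishes as `S ≠ ∅`.
An independent set through the new vertex has at most `1 + |S| ≤ α(G)` elements, so
`α(G(C)) = α(G)`. -/

namespace Finset

variable {α : Type*}

theorem map_some_eraseNone_of_notMem [DecidableEq α] {s : Finset (Option α)} (h : none ∉ s) :
    s.eraseNone.map Function.Embedding.some = s := by
  rw [map_some_eraseNone, erase_eq_of_notMem h]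

theorem insertNone_eraseNone_of_mem [DecidableEq α] {s : Finset (Option α)} (h : none ∈ s) :
    insertNone s.eraseNone = s := by
  rw [insertNone_eraseNone, insert_eq_of_mem h]

theorem sum_finset_option [Fintype α] {M : Type*} [AddCommMonoid M]
    (f : Finset (Option α) → M) :
    ∑ s, f s =
      ∑ t : Finset α, f (t.map Function.Embedding.some) + ∑ t, f (insertNone t) := by
  classical
  rw [← sum_filter_add_sum_filter_not univ (fun s => none ∉ s)]
  congr 1
  · refine sum_nbij' eraseNone (map Function.Embedding.some) (by simp) (by simp)
      (fun s hs => map_some_eraseNone_of_notMem (mem_filter.1 hs).2) (by simp) fun s hs => ?_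
    rw [map_some_eraseNone_of_notMem (mem_filter.1 hs).2]
  · refine sum_nbij' eraseNone insertNone (by simp) (by simp)
      (fun s hs => insertNone_eraseNone_of_mem (of_not_not (mem_filter.1 hs).2)) (by simp)
      fun s hs => ?_
    rw [insertNone_eraseNone_of_mem (of_not_not (mem_filter.1 hs).2)]

end Finset

section Suspension

open Finset

variable {V : Type*} (G : SimpleGraph V)

@[simp]
theorem susp_adj_some_some (C : Set V) (a b : V) : (susp G C).Adj (some a) (some b) ↔ G.Adj a b :=
  Iff.rfl

@[simp]
theorem susp_adj_some_none (C : Set V) (a : V) : (susp G C).Adj (some a) none ↔ a ∈ C :=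
  Iff.rfl

@[simp]
theorem susp_adj_none_some (C : Set V) (b : V) : (susp G C).Adj none (some b) ↔ b ∈ C :=
  Iff.rfl

theorem isIndepFinset_susp_map_some (C : Set V) (t : Finset V) :
    IsIndepFinset (susp G C) (t.map Function.Embedding.some) ↔ IsIndepFinset G t := by
  simp [IsIndepFinset]

theorem isIndepFinset_susp_insertNone (C : Set V) (t : Finset V) :
    IsIndepFinset (susp G C) (insertNone t) ↔ IsIndepFinset G t ∧ ∀ a ∈ t, a ∉ C := by
  simp only [IsIndepFinset, forall_mem_insertNone, SimpleGraph.irrefl, not_false_eq_true,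
    susp_adj_none_some, true_and, susp_adj_some_none, susp_adj_some_some]
  grind

variable [Fintype V]

theorem isIndepFinset_of_subset_compl [DecidableEq V] {C : Finset V}
    (hcover : ∀ a b, G.Adj a b → a ∈ C ∨ b ∈ C) {t : Finset V} (ht : t ⊆ Cᶜ) :
    IsIndepFinset G t := by
  intro a ha b hb hab
  rcases hcover a b hab with h | h
  · exact mem_compl.1 (ht ha) h
  · exact mem_compl.1 (ht hb) h

theorem le_indepNumber {s : Finset V} (hs : IsIndepFinset G s) : #s ≤ indepNumber G :=
  le_sup (f := card) (mem_filter.2 ⟨mem_univ s, hs⟩)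

theorem indepNumber_le_iff {n : ℕ} :
    indepNumber G ≤ n ↔ ∀ s, IsIndepFinset G s → #s ≤ n := by
  simp [indepNumber, Finset.sup_le_iff]

theorem indepPolynomial_susp (C : Set V) (x : ℤ) :
    indepPolynomial (susp G C) x =
      indepPolynomial G x + x * ∑ t with IsIndepFinset G t ∧ ∀ a ∈ t, a ∉ C, x ^ #t := by
  simp only [indepPolynomial, sum_filter]
  rw [sum_finset_option]
  simp [isIndepFinset_susp_map_some, isIndepFinset_susp_insertNone, ite_and, mul_sum, pow_succ']

theorem indepPolynomial_susp_of_vertexCover [DecidableEq V] (C : Finset V)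
    (hcover : ∀ a b, G.Adj a b → a ∈ C ∨ b ∈ C) (x : ℤ) :
    indepPolynomial (susp G C) x = indepPolynomial G x + x * (x + 1) ^ #Cᶜ := by
  rw [indepPolynomial_susp, ← sum_pow_mul_eq_add_pow]
  simp only [one_pow, mul_one]
  congr 2
  refine sum_congr ?_ fun _ _ => rfl
  ext t
  simp only [mem_filter, mem_univ, true_and, mem_powerset, mem_coe]
  exact ⟨fun ht a ha => mem_compl.2 (ht.2 a ha),
    fun ht => ⟨isIndepFinset_of_subset_compl G hcover ht, fun a ha => mem_compl.1 (ht ha)⟩⟩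

theorem indepNumber_susp [DecidableEq V] (C : Finset V) (hC : #Cᶜ < indepNumber G) :
    indepNumber (susp G C) = indepNumber G := by
  refine le_antisymm ((indepNumber_le_iff _).2 fun s hs => ?_)
    ((indepNumber_le_iff G).2 fun t ht => ?_)
  · by_cases hnone : none ∈ s
    · rw [← insertNone_eraseNone_of_mem hnone, isIndepFinset_susp_insertNone] at hs
      have hsub : s.eraseNone ⊆ Cᶜ := fun a ha => mem_compl.2 (hs.2 a ha)
      have := card_le_card hsub
      rw [← insertNone_eraseNone_of_mem hnone, card_insertNone]
      omega
    · rw [← map_some_eraseNone_of_notMem hnone, isIndepFinset_susp_map_some] at hs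
      rw [← map_some_eraseNone_of_notMem hnone, card_map]
      exact le_indepNumber G hs
  · simpa using le_indepNumber _ ((isIndepFinset_susp_map_some G C t).2 ht)

end Suspension

theorem stmt14_general {V : Type*} [Fintype V] [DecidableEq V] (G : SimpleGraph V)
    (C : Finset V) (hcover : ∀ a b, G.Adj a b → a ∈ C ∨ b ∈ C)
    (hS1 : 1 ≤ (Cᶜ : Finset V).card)
    (hS2 : (Cᶜ : Finset V).card ≤ indepNumber G - 1) :
    PseudoGorensteinStar G ↔ PseudoGorensteinStar (susp G (↑C : Set V)) := by
  rw [PseudoGorensteinStar, PseudoGorensteinStar, indepPolynomial_susp_of_vertexCover G C hcover,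
    indepNumber_susp G C (by omega), neg_add_cancel, zero_pow (by omega), mul_zero, add_zero]

/-- Suspension over a vertex cover `C` with `1 ≤ |S| ≤ α - 1` preserves the
pseudo-Gorenstein* property. -/
theorem stmt14 {V : Type*} [Fintype V] [DecidableEq V] (G : SimpleGraph V)
    (C : Finset V) (hcover : ∀ a b, G.Adj a b → a ∈ C ∨ b ∈ C)
    (hα : 2 ≤ indepNumber G)
    (hS1 : 1 ≤ (Cᶜ : Finset V).card)
    (hS2 : (Cᶜ : Finset V).card ≤ indepNumber G - 1) :
    PseudoGorensteinStar G ↔ PseudoGorensteinStar (susp G (↑C : Set V)) :=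
  stmt14_general G C hcover hS1 hS2
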